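/- Generalized lemma with unequal sample sizes: if Z₁ = Σ_{i=1}^{M₁} exp(−E₁⁽ⁱ⁾) and Z₂ = Σ_{i=1}^{M₂} exp(−E₂⁽ⁱ⁾) with σ₁ > σ₂ > 0, then P(Z₁/M₁ > Z₂/M₂) ≥ 1 − [4/(e^{σ₁²/2} − e^{σ₂²/2})²]·[(e^{2σ₁²} − e^{σ₁²})/M₁ + (e^{2σ₂²} − e^{σ₂²})/M₂]. -/

import Mathlib

/-!
Each `W = exp (-E)` with `E ~ N(0, σ²)` is lognormal, with mean `exp (σ² / 2)` and variance
`exp (2σ²) - exp σ²` (read off the Gaussian moment generating function). Hence the difference `D`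
of the two empirical means has mean `exp (σ₁² / 2) - exp (σ₂² / 2) > 0` and, by pairwise
independence, variance `Var W₁ / M₁ + Var W₂ / M₂`. The event `D ≤ 0` forces `|D - 𝔼 D| ≥ 𝔼 D`, so
Chebyshev's inequality gives `P (D ≤ 0) ≤ Var D / (𝔼 D)²`.
-/

open MeasureTheory ProbabilityTheory Real Filter
open scoped NNReal ENNReal

lemma one_sub_variance_div_sq_le_prob_pos {Ω : Type*} [MeasurableSpace Ω] {μ : Measure Ω}
    [IsProbabilityMeasure μ] {X : Ω → ℝ} (hX : MemLp X 2 μ) (hmean : 0 < μ[X]) :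
    1 - ENNReal.ofReal (Var[X; μ] / μ[X] ^ 2) ≤ μ {ω | 0 < X ω} := by
  have hle : {ω | X ω ≤ 0} ⊆ {ω | μ[X] ≤ |X ω - μ[X]|} := fun ω (hω : X ω ≤ 0) ↦ by
    rw [Set.mem_ofPred_eq, abs_sub_comm]
    exact (by linarith : μ[X] ≤ μ[X] - X ω).trans (le_abs_self _)
  rw [tsub_le_iff_right, ← measure_univ (μ := μ)]
  calc μ Set.univ ≤ μ ({ω | 0 < X ω} ∪ {ω | X ω ≤ 0}) := measure_mono fun ω _ ↦ lt_or_ge 0 (X ω)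
    _ ≤ μ {ω | 0 < X ω} + μ {ω | X ω ≤ 0} := measure_union_le _ _
    _ ≤ μ {ω | 0 < X ω} + ENNReal.ofReal (Var[X; μ] / μ[X] ^ 2) := by
      gcongr
      exact (measure_mono hle).trans (meas_ge_le_variance_div_sq hX hmean)

section EmpiricalMeans

lemma variance_sum_const_mul {Ω ι : Type*} [MeasurableSpace Ω] {μ : Measure Ω} [Fintype ι]
    {X : ι → Ω → ℝ} (c : ι → ℝ)
    (hX : ∀ i, MemLp (X i) 2 μ) (hindep : Pairwise fun i j ↦ IndepFun (X i) (X j) μ) :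
    Var[fun ω ↦ ∑ i, c i * X i ω; μ] = ∑ i, c i ^ 2 * Var[X i; μ] := by
  have h := IndepFun.variance_sum (μ := μ) (X := fun i ω ↦ c i * X i ω) (s := Finset.univ)
    (fun i _ ↦ (hX i).const_mul (c i))
    fun i _ j _ hij ↦ (hindep hij).comp (measurable_const_mul (c i)) (measurable_const_mul (c j))
  simp only [variance_const_mul] at h
  rw [← h]
  congr 1
  ext ω
  simp

variable {Ω ι κ : Type*} [Fintype ι] [Fintype κ]

noncomputable def empiricalMeanDiff (X : ι ⊕ κ → Ω → ℝ) : Ω → ℝ := fun ω ↦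
  (∑ i, X (.inl i) ω) / Fintype.card ι - (∑ j, X (.inr j) ω) / Fintype.card κ

lemma empiricalMeanDiff_eq_sum_mul (X : ι ⊕ κ → Ω → ℝ) (ω : Ω) :
    empiricalMeanDiff X ω
      = ∑ k, Sum.elim (fun _ ↦ (Fintype.card ι : ℝ)⁻¹) (fun _ ↦ -(Fintype.card κ : ℝ)⁻¹) k
          * X k ω := by
  simp [empiricalMeanDiff, Fintype.sum_sum_type, ← Finset.mul_sum, div_eq_inv_mul, sub_eq_add_neg]

variable [MeasurableSpace Ω] {μ : Measure Ω} {X : ι ⊕ κ → Ω → ℝ}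

lemma memLp_empiricalMeanDiff {p : ℝ≥0∞} (hX : ∀ k, MemLp (X k) p μ) :
    MemLp (empiricalMeanDiff X) p μ := by
  rw [funext (empiricalMeanDiff_eq_sum_mul X)]
  exact memLp_finsetSum _ fun k _ ↦ (hX k).const_mul _

lemma integral_empiricalMeanDiff [Nonempty ι] [Nonempty κ] {a b : ℝ}
    (hX : ∀ k, Integrable (X k) μ) (ha : ∀ i, μ[X (.inl i)] = a) (hb : ∀ j, μ[X (.inr j)] = b) :
    μ[empiricalMeanDiff X] = a - b := by
  unfold empiricalMeanDiff
  rw [integral_sub ((integrable_finsetSum _ fun i _ ↦ hX _).div_const _)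
      ((integrable_finsetSum _ fun j _ ↦ hX _).div_const _),
    integral_div, integral_div, integral_finsetSum _ fun i _ ↦ hX _,
    integral_finsetSum _ fun j _ ↦ hX _]
  simp [ha, hb]

lemma variance_empiricalMeanDiff [Nonempty ι] [Nonempty κ] {s t : ℝ}
    (hX : ∀ k, MemLp (X k) 2 μ) (hindep : Pairwise fun k l ↦ IndepFun (X k) (X l) μ)
    (hs : ∀ i, Var[X (.inl i); μ] = s) (ht : ∀ j, Var[X (.inr j); μ] = t) :
    Var[empiricalMeanDiff X; μ] = s / Fintype.card ι + t / Fintype.card κ := by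
  rw [funext (empiricalMeanDiff_eq_sum_mul X), variance_sum_const_mul _ hX hindep]
  simp only [Fintype.sum_sum_type, Sum.elim_inl, Sum.elim_inr, hs, ht, Finset.sum_const,
    Finset.card_univ, nsmul_eq_mul, neg_sq]
  field_simp

end EmpiricalMeans

section LogNormal

variable {Ω : Type*} [MeasurableSpace Ω] {P : Measure Ω} {X : Ω → ℝ} {v : ℝ≥0}

lemma integrable_exp_mul_of_map_eq_gaussianReal [NeZero P] {m : ℝ}
    (hX : P.map X = gaussianReal m v) (t : ℝ) : Integrable (fun ω ↦ exp (t * X ω)) P := by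
  rw [← mgf_pos_iff, mgf_gaussianReal hX]
  exact exp_pos _

lemma memLp_exp_neg_of_map_eq_gaussianReal [NeZero P] {m : ℝ}
    (hX : P.map X = gaussianReal m v) :
    MemLp (fun ω ↦ exp (-X ω)) 2 P := by
  have h := integrable_exp_mul_of_map_eq_gaussianReal hX
  refine (memLp_two_iff_integrable_sq (by simpa using (h (-1)).aestronglyMeasurable)).2 ?_
  simpa [sq, ← exp_add, ← two_mul] using h (-2)

lemma integral_exp_neg_of_map_eq_gaussianReal (hX : P.map X = gaussianReal 0 v) :
    ∫ ω, exp (-X ω) ∂P = exp (v / 2) := by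
  simpa [mgf] using mgf_gaussianReal hX (-1)

lemma variance_exp_neg_of_map_eq_gaussianReal [IsProbabilityMeasure P]
    (hX : P.map X = gaussianReal 0 v) :
    Var[fun ω ↦ exp (-X ω); P] = exp (2 * v) - exp v := by
  rw [variance_eq_sub (memLp_exp_neg_of_map_eq_gaussianReal hX),
    integral_exp_neg_of_map_eq_gaussianReal hX, ← exp_nat_mul]
  have h := mgf_gaussianReal hX (-2)
  simp only [mgf] at h
  simp only [Pi.pow_apply, ← exp_nat_mul]
  push_cast
  rw [show (fun ω ↦ exp (2 * -X ω)) = fun ω ↦ exp (-2 * X ω) by ext; ring_nf, h]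
  ring_nf

end LogNormal

theorem stmt11_general {Ω : Type*} [MeasureSpace Ω] [IsProbabilityMeasure (ℙ : Measure Ω)]
    (σ₁ σ₂ : ℝ≥0) (hσ : σ₂ < σ₁)
    (M₁ M₂ : ℕ) (hM₁ : 1 ≤ M₁) (hM₂ : 1 ≤ M₂)
    (E₁ : Fin M₁ → Ω → ℝ) (E₂ : Fin M₂ → Ω → ℝ)
    (hd₁ : ∀ i, Measure.map (E₁ i) ℙ = gaussianReal 0 (σ₁ ^ 2))
    (hd₂ : ∀ i, Measure.map (E₂ i) ℙ = gaussianReal 0 (σ₂ ^ 2))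
    (hindep : iIndepFun (Sum.elim E₁ E₂) ℙ) :
    1 - ENNReal.ofReal
        (4 / (Real.exp ((σ₁ : ℝ) ^ 2 / 2) - Real.exp ((σ₂ : ℝ) ^ 2 / 2)) ^ 2 *
          ((Real.exp (2 * (σ₁ : ℝ) ^ 2) - Real.exp ((σ₁ : ℝ) ^ 2)) / M₁
            + (Real.exp (2 * (σ₂ : ℝ) ^ 2) - Real.exp ((σ₂ : ℝ) ^ 2)) / M₂))
      ≤ ℙ {ω | (∑ i, Real.exp (-(E₂ i ω))) / M₂
              < (∑ i, Real.exp (-(E₁ i ω))) / M₁} := by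
  have : Nonempty (Fin M₁) := ⟨⟨0, hM₁⟩⟩
  have : Nonempty (Fin M₂) := ⟨⟨0, hM₂⟩⟩
  set X : Fin M₁ ⊕ Fin M₂ → Ω → ℝ := fun k ω ↦ exp (-Sum.elim E₁ E₂ k ω)
  have hX : ∀ k, MemLp (X k) 2 ℙ := by
    rintro (i | j)
    exacts [memLp_exp_neg_of_map_eq_gaussianReal (hd₁ i),
      memLp_exp_neg_of_map_eq_gaussianReal (hd₂ j)]
  have hpair : Pairwise fun k l ↦ IndepFun (X k) (X l) ℙ := fun k l hkl ↦
    (hindep.indepFun hkl).comp (measurable_exp.comp measurable_neg)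
      (measurable_exp.comp measurable_neg)
  have hmean := integral_empiricalMeanDiff
    (fun k ↦ (hX k).integrable one_le_two)
    (fun i ↦ integral_exp_neg_of_map_eq_gaussianReal (hd₁ i))
    (fun j ↦ integral_exp_neg_of_map_eq_gaussianReal (hd₂ j))
  have hvar := variance_empiricalMeanDiff hX hpair
    (fun i ↦ variance_exp_neg_of_map_eq_gaussianReal (hd₁ i))
    (fun j ↦ variance_exp_neg_of_map_eq_gaussianReal (hd₂ j))
  simp only [Fintype.card_fin, NNReal.coe_pow] at hmean hvar
  have hgap : 0 < exp ((σ₁ : ℝ) ^ 2 / 2) - exp ((σ₂ : ℝ) ^ 2 / 2) := by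
    rw [sub_pos, exp_lt_exp]
    gcongr
  have hcheb := one_sub_variance_div_sq_le_prob_pos (memLp_empiricalMeanDiff hX) (hmean ▸ hgap)
  rw [hmean] at hcheb
  simp only [empiricalMeanDiff, Fintype.card_fin, sub_pos] at hcheb
  refine le_trans (tsub_le_tsub_left (ENNReal.ofReal_le_ofReal ?_) 1) hcheb
  rw [← hvar, div_eq_inv_mul, inv_eq_one_div]
  exact mul_le_mul_of_nonneg_right (by gcongr; norm_num) (variance_nonneg _ _)

theorem stmt11 {Ω : Type*} [MeasureSpace Ω] [IsProbabilityMeasure (ℙ : Measure Ω)]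
    (σ₁ σ₂ : ℝ≥0) (hσ₂ : 0 < σ₂) (hσ : σ₂ < σ₁)
    (M₁ M₂ : ℕ) (hM₁ : 1 ≤ M₁) (hM₂ : 1 ≤ M₂)
    (E₁ : Fin M₁ → Ω → ℝ) (E₂ : Fin M₂ → Ω → ℝ)
    (hE₁ : ∀ i, Measurable (E₁ i)) (hE₂ : ∀ i, Measurable (E₂ i))
    (hd₁ : ∀ i, Measure.map (E₁ i) ℙ = gaussianReal 0 (σ₁ ^ 2))
    (hd₂ : ∀ i, Measure.map (E₂ i) ℙ = gaussianReal 0 (σ₂ ^ 2))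
    (hindep : iIndepFun (Sum.elim E₁ E₂) ℙ) :
    1 - ENNReal.ofReal
        (4 / (Real.exp ((σ₁ : ℝ) ^ 2 / 2) - Real.exp ((σ₂ : ℝ) ^ 2 / 2)) ^ 2 *
          ((Real.exp (2 * (σ₁ : ℝ) ^ 2) - Real.exp ((σ₁ : ℝ) ^ 2)) / M₁
            + (Real.exp (2 * (σ₂ : ℝ) ^ 2) - Real.exp ((σ₂ : ℝ) ^ 2)) / M₂))
      ≤ ℙ {ω | (∑ i, Real.exp (-(E₂ i ω))) / M₂
              < (∑ i, Real.exp (-(E₁ i ω))) / M₁} :=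
  stmt11_general σ₁ σ₂ hσ M₁ M₂ hM₁ hM₂ E₁ E₂ hd₁ hd₂ hindep
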